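/- In the Markov chain of the previous context, the steady-state reliability (probability of being in state $0$, i.e., of a successful transmission in a sampling period) equals $\pi(0) = \left( 1 + \sum_{m=1}^{F-1} \prod_{i=0}^{m-1}(1-s_i) + \frac{\prod_{i=0}^{F-1}(1-s_i)}{s_f} \right)^{-1}$. -/
import Mathlib


open Finset

/-- Transition matrix of the event-trigger/CRM Markov chain on states `{0,…,F}`. -/
noncomputable def etMarkovKernel (F : ℕ) (s : ℕ → ℝ) (sf : ℝ) :
    Matrix (Fin (F + 1)) (Fin (F + 1)) ℝ := fun i j =>
  if (i : ℕ) < F then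
    if (j : ℕ) = 0 then s (i : ℕ)
    else if (j : ℕ) = (i : ℕ) + 1 then 1 - s (i : ℕ) else 0
  else
    if (j : ℕ) = 0 then sf
    else if j = i then 1 - sf else 0

/-- The steady-state reliability, i.e. the stationary probability of state `0`,
equals `(1 + ∑_{m=1}^{F-1} ∏_{i<m}(1-s i) + (∏_{i<F}(1-s i))/sf)⁻¹`. -/
theorem etMarkovChain_reliability
    (F : ℕ) (hF : 1 ≤ F) (s : ℕ → ℝ) (sf : ℝ)
    (hs : ∀ m < F, s m ∈ Set.Ioo (0 : ℝ) 1) (hsf : sf ∈ Set.Ioo (0 : ℝ) 1)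
    (π : Fin (F + 1) → ℝ)
    (hnonneg : ∀ i, 0 ≤ π i) (hsum : ∑ i, π i = 1)
    (hstat : ∀ j, ∑ i, π i * etMarkovKernel F s sf i j = π j) :
    π 0 = (1 + (∑ m ∈ Icc 1 (F - 1), ∏ i ∈ range m, (1 - s i)) +
        (∏ i ∈ range F, (1 - s i)) / sf)⁻¹ := by
  have hsf0 : (0:ℝ) < sf := hsf.1
  -- key stationary recursion
  have key : ∀ j : Fin (F+1), (j:ℕ) ≠ 0 →
      π j = π ⟨(j:ℕ)-1, by omega⟩ * (1 - s ((j:ℕ)-1)) +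
        (if (j:ℕ) = F then π j * (1 - sf) else 0) := by
    intro j hj
    have hjF : (j:ℕ) ≤ F := Nat.lt_succ_iff.mp j.isLt
    have hj1 : 1 ≤ (j:ℕ) := Nat.one_le_iff_ne_zero.mpr hj
    set a : Fin (F+1) := ⟨(j:ℕ)-1, by omega⟩ with ha
    have hst := hstat j
    have hpt : ∀ i : Fin (F+1), π i * etMarkovKernel F s sf i j =
        (if i = a then π a * (1 - s ((j:ℕ)-1)) else 0) +
        (if (j:ℕ) = F ∧ i = Fin.last F then π j * (1 - sf) else 0) := by
      intro i
      unfold etMarkovKernel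
      by_cases hiF : (i:ℕ) < F
      · have hil : i ≠ Fin.last F := by
          intro h; rw [h] at hiF; simp at hiF
        rw [if_pos hiF, if_neg hj]
        by_cases hia : i = a
        · have hv : (i:ℕ) = (j:ℕ) - 1 := by rw [hia]
          rw [if_pos (by omega : (j:ℕ) = (i:ℕ) + 1), if_pos hia,
            if_neg (fun h => hil h.2), hia]
          have hva : (a:ℕ) = (j:ℕ) - 1 := rfl
          rw [hva]
          ring
        · have hv : (i:ℕ) ≠ (j:ℕ) - 1 := fun h => hia (Fin.ext h)
          rw [if_neg (by omega : ¬ (j:ℕ) = (i:ℕ) + 1), if_neg hia,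
            if_neg (fun h => hil h.2)]
          ring
      · have hiv : (i:ℕ) = F := by omega
        have hil : i = Fin.last F := Fin.ext hiv
        have hia : i ≠ a := by
          intro h
          have : (i:ℕ) = (j:ℕ) - 1 := by rw [h]
          omega
        rw [if_neg hiF, if_neg hj]
        by_cases hjv : (j:ℕ) = F
        · have hji : j = i := Fin.ext (by omega)
          rw [if_pos hji, if_neg hia, if_pos ⟨hjv, hil⟩, hji]
          ring
        · have hji : j ≠ i := fun h => hjv (by rw [h, hiv])
          rw [if_neg hji, if_neg hia, if_neg (fun h => hjv h.1)]
          ring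
    have e1 : ∑ i : Fin (F+1), (if i = a then π a * (1 - s ((j:ℕ)-1)) else 0)
        = π a * (1 - s ((j:ℕ)-1)) := by
      rw [Finset.sum_ite_eq' univ a (fun _ => π a * (1 - s ((j:ℕ)-1)))]
      simp
    have e2 : ∑ i : Fin (F+1), (if (j:ℕ) = F ∧ i = Fin.last F then π j * (1 - sf) else 0)
        = if (j:ℕ) = F then π j * (1 - sf) else 0 := by
      by_cases hjv : (j:ℕ) = F
      · simp only [hjv, true_and, if_pos]
        rw [Finset.sum_ite_eq' univ (Fin.last F) (fun _ => π j * (1 - sf))]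
        simp
      · simp [hjv]
    rw [Finset.sum_congr rfl (fun i _ => hpt i), Finset.sum_add_distrib, e1, e2] at hst
    exact hst.symm
  -- geometric formula for states below F
  have hgeo : ∀ m, (hm : m < F) → π ⟨m, by omega⟩ = π 0 * ∏ i ∈ range m, (1 - s i) := by
    intro m
    induction m with
    | zero => intro _; simp
    | succ n ih =>
      intro hm
      have hn : n < F := by omega
      have hk := key ⟨n+1, by omega⟩ (by simp)
      simp only [show ((⟨n+1, by omega⟩ : Fin (F+1)) : ℕ) = n + 1 from rfl,
        Nat.add_sub_cancel] at hk
      rw [if_neg (by omega : ¬ n + 1 = F)] at hk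
      rw [hk, ih hn, Finset.prod_range_succ]
      ring
  -- value at state F
  have hlast : π (Fin.last F) = π 0 * (∏ i ∈ range F, (1 - s i)) / sf := by
    have hk := key (Fin.last F) (by simp; omega)
    simp only [Fin.val_last, if_pos rfl, if_true] at hk
    have h1 : π (Fin.last F) * sf = π ⟨F-1, by omega⟩ * (1 - s (F-1)) := by
      nlinarith [hk]

    have h2 : π ⟨F-1, by omega⟩ = π 0 * ∏ i ∈ range (F-1), (1 - s i) :=
      hgeo (F-1) (by omega)
    have h3 : ∏ i ∈ range F, (1 - s i) = (∏ i ∈ range (F-1), (1 - s i)) * (1 - s (F-1)) := by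
      conv_lhs => rw [show F = (F-1) + 1 by omega]
      rw [Finset.prod_range_succ]
    rw [h2] at h1
    rw [h3, eq_div_iff (ne_of_gt hsf0)]
    linear_combination h1
  -- the normalizing function
  set g : ℕ → ℝ := fun m => if m < F then ∏ i ∈ range m, (1 - s i)
      else (∏ i ∈ range F, (1 - s i)) / sf with hg
  have hπg : ∀ i : Fin (F+1), π i = π 0 * g i := by
    intro i
    by_cases hiF : (i:ℕ) < F
    · have : i = ⟨(i:ℕ), by omega⟩ := by simp
      rw [this, hgeo (i:ℕ) hiF, hg]
      simp [hiF]
    · have hiv : (i:ℕ) = F := by omega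
      have : i = Fin.last F := Fin.ext hiv
      rw [this, hlast, hg]
      simp only [Fin.val_last, if_neg (lt_irrefl F)]
      ring
  have hsumD : ∑ m ∈ range (F+1), g m = (1 + (∑ m ∈ Icc 1 (F - 1), ∏ i ∈ range m, (1 - s i)) +
      (∏ i ∈ range F, (1 - s i)) / sf) := by
    rw [Finset.sum_range_succ]
    have hgF : g F = (∏ i ∈ range F, (1 - s i)) / sf := by simp [hg]
    have hrest : ∑ m ∈ range F, g m = ∑ m ∈ range F, ∏ i ∈ range m, (1 - s i) :=
      Finset.sum_congr rfl (fun m hm => by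
        simp [hg, Finset.mem_range.mp hm])
    rw [hgF, hrest]
    congr 1
    rw [Finset.range_eq_Ico, Finset.sum_eq_sum_Ico_succ_bot (by omega : 0 < F)]
    have hIcc : Icc 1 (F-1) = Ico 1 F := by
      rw [← Finset.Ico_add_one_right_eq_Icc]
      congr 1
      omega
    rw [hIcc]
    simp
  have hπD : π 0 * (1 + (∑ m ∈ Icc 1 (F - 1), ∏ i ∈ range m, (1 - s i)) +
      (∏ i ∈ range F, (1 - s i)) / sf) = 1 := by
    rw [← hsumD, ← Fin.sum_univ_eq_sum_range g (F+1), Finset.mul_sum, ← hsum]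
    exact Finset.sum_congr rfl (fun i _ => (hπg i).symm)
  have hDpos : 0 < (1 + (∑ m ∈ Icc 1 (F - 1), ∏ i ∈ range m, (1 - s i)) +
      (∏ i ∈ range F, (1 - s i)) / sf) := by
    have hs1 : 0 ≤ ∑ m ∈ Icc 1 (F - 1), ∏ i ∈ range m, (1 - s i) := by
      apply Finset.sum_nonneg
      intro m hm
      apply Finset.prod_nonneg
      intro i hi
      have hi' : i < F := by
        have := Finset.mem_Icc.mp hm
        have := Finset.mem_range.mp hi
        omega
      have := (hs i hi').2
      linarith
    have hs2 : 0 ≤ (∏ i ∈ range F, (1 - s i)) / sf := by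
      apply div_nonneg _ (le_of_lt hsf0)
      apply Finset.prod_nonneg
      intro i hi
      have := (hs i (Finset.mem_range.mp hi)).2
      linarith
    linarith
  rw [inv_eq_one_div, eq_div_iff (ne_of_gt hDpos)]
  exact hπD
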